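/- Let Prim = μ * φ be the Dirichlet convolution of the Möbius function with Euler's totient function. Then Prim(n) ≠ 0 if and only if n is not congruent to 2 modulo 4 (for n ≥ 1). -/

import Mathlib

/-! `μ * φ` is multiplicative, so it vanishes at `n` exactly when it vanishes at some prime power
`p ^ a` exactly dividing `n`. There it equals `φ (p ^ a) - φ (p ^ (a - 1))`, which is `0` only for
`p ^ a = 2`; and `2` divides `n` exactly once iff `n ≡ 2 [MOD 4]`. -/

open ArithmeticFunction

/-- Euler's totient function, as an integer-valued arithmetic function. -/
noncomputable def totientArith : ArithmeticFunction ℤ :=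
  ⟨fun n => (Nat.totient n : ℤ), by simp⟩

theorem isMultiplicative_totientArith : totientArith.IsMultiplicative :=
  ⟨by simp [totientArith], fun h => by simp [totientArith, Nat.totient_mul h]⟩

theorem ArithmeticFunction.IsMultiplicative.apply_ne_zero_iff {R : Type*}
    [CommMonoidWithZero R] [Nontrivial R] [NoZeroDivisors R] {f : ArithmeticFunction R}
    (hf : f.IsMultiplicative) {n : ℕ} (hn : n ≠ 0) :
    f n ≠ 0 ↔ ∀ p ∈ n.primeFactors, f (p ^ n.factorization p) ≠ 0 := by
  rw [hf.multiplicative_factorization f hn, Finsupp.prod_ne_zero_iff, Nat.support_factorization]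

theorem ArithmeticFunction.moebius_mul_apply_prime_pow_succ (f : ArithmeticFunction ℤ)
    {p : ℕ} (hp : p.Prime) (k : ℕ) :
    (moebius * f) (p ^ (k + 1)) = f (p ^ (k + 1)) - f (p ^ k) := by
  rw [mul_apply, Nat.sum_divisorsAntidiagonal (fun x y => moebius x * f y),
    Nat.sum_divisors_prime_pow hp, Finset.sum_range_succ', Finset.sum_range_succ',
    Finset.sum_eq_zero fun i _ => by
      rw [moebius_apply_prime_pow hp (by omega), if_neg (by omega), zero_mul]]
  simp [moebius_apply_prime hp, sub_eq_neg_add, pow_succ, hp.pos]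

theorem Nat.totient_prime_pow_succ_eq_iff {p : ℕ} (hp : p.Prime) (k : ℕ) :
    Nat.totient (p ^ (k + 1)) = Nat.totient (p ^ k) ↔ p = 2 ∧ k = 0 := by
  rcases k with _ | k
  · simp [Nat.totient_prime hp]
  · have hpos : 0 < Nat.totient (p ^ (k + 1)) := Nat.totient_pos.2 (pow_pos hp.pos _)
    rw [_root_.pow_succ' p (k + 1),
      Nat.totient_mul_of_prime_of_dvd hp (dvd_pow_self p k.succ_ne_zero)]
    simp only [Nat.add_one_ne_zero, and_false, iff_false]
    exact ((Nat.lt_mul_iff_one_lt_left hpos).2 hp.one_lt).ne'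

theorem Nat.factorization_two_eq_one_iff {n : ℕ} (hn : n ≠ 0) :
    n.factorization 2 = 1 ↔ n % 4 = 2 := by
  have h2 : 2 ∣ n ↔ 1 ≤ n.factorization 2 := by
    rw [← Nat.prime_two.pow_dvd_iff_le_factorization hn, pow_one]
  have h4 : 2 ^ 2 ∣ n ↔ 2 ≤ n.factorization 2 := Nat.prime_two.pow_dvd_iff_le_factorization hn
  omega

theorem moebius_mul_totientArith_prime_pow_ne_zero_iff {p a : ℕ} (hp : p.Prime) (ha : a ≠ 0) :
    (moebius * totientArith) (p ^ a) ≠ 0 ↔ ¬(p = 2 ∧ a = 1) := by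
  obtain ⟨k, rfl⟩ := Nat.exists_eq_succ_of_ne_zero ha
  rw [moebius_mul_apply_prime_pow_succ _ hp, sub_ne_zero]
  simp [totientArith, Nat.totient_prime_pow_succ_eq_iff hp]

/-- Let `Prim = μ * φ` (Dirichlet convolution of the Möbius function with
Euler's totient). Then for `n ≥ 1`, `Prim n ≠ 0` iff `n` is not congruent to `2` mod `4`. -/
theorem prim_ne_zero_iff (n : ℕ) (hn : 1 ≤ n) :
    (ArithmeticFunction.moebius * totientArith) n ≠ 0 ↔ ¬ n % 4 = 2 := by
  have hn0 : n ≠ 0 := by omega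
  rw [(isMultiplicative_moebius.mul isMultiplicative_totientArith).apply_ne_zero_iff hn0,
    ← Nat.factorization_two_eq_one_iff hn0]
  constructor
  · intro h h2
    have h2mem : 2 ∈ n.primeFactors := by simp [← Nat.support_factorization, h2]
    exact (moebius_mul_totientArith_prime_pow_ne_zero_iff Nat.prime_two (by omega)).1
      (h 2 h2mem) ⟨rfl, h2⟩
  · intro h p hp
    rw [moebius_mul_totientArith_prime_pow_ne_zero_iff (Nat.prime_of_mem_primeFactors hp)
      (Finsupp.mem_support_iff.1 hp)]
    rintro ⟨rfl, h2⟩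
    exact h h2
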